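/- A threshold graph that is not complete has exactly one minimum vertex-cut, i.e., there is a unique vertex-cut of minimum cardinality. -/
import Mathlib


open Finset

/-- `G` is chordal: every cycle of length at least 4 has a chord, i.e. an edge
joining two non-consecutive vertices of the cycle. -/
def IsChordal {V : Type*} (G : SimpleGraph V) : Prop :=
  ∀ (n : ℕ), 4 ≤ n → ∀ f : ZMod n → V, Function.Injective f →
    (∀ i : ZMod n, G.Adj (f i) (f (i + 1))) →
    ∃ i j : ZMod n, i ≠ j ∧ i + 1 ≠ j ∧ j + 1 ≠ i ∧ G.Adj (f i) (f j)

/-- The number of cliques of `G` with exactly `i` vertices. -/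
noncomputable def cliqueCount {V : Type*} [Fintype V] (G : SimpleGraph V) (i : ℕ) : ℕ :=
  {s : Finset V | G.IsNClique i s}.ncard

/-- `W(G - Y)`: the number of connected components of the subgraph of `G` induced on the
complement of `Y`. -/
noncomputable def numComponents {V : Type*} [Fintype V] [DecidableEq V] (G : SimpleGraph V)
    (Y : Finset V) : ℕ :=
  Nat.card (G.induce (↑(Yᶜ) : Set V)).ConnectedComponent

/-- A vertex-cut of `G`: a set of vertices whose removal disconnects `G`. -/
def IsVertexCut {V : Type*} [Fintype V] [DecidableEq V] (G : SimpleGraph V) (Y : Finset V) :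
    Prop :=
  ¬ (G.induce (↑(Yᶜ) : Set V)).Connected

/-- The vertex connectivity `κ(G)`: the minimum cardinality of a vertex-cut. -/
noncomputable def vertexConnectivity {V : Type*} [Fintype V] [DecidableEq V]
    (G : SimpleGraph V) : ℕ :=
  sInf {k | ∃ Y : Finset V, IsVertexCut G Y ∧ Y.card = k}

/-- `s` is a maximal clique of `G`. -/
def IsMaxCliqueOf {V : Type*} (G : SimpleGraph V) (s : Finset V) : Prop :=
  G.IsClique (↑s : Set V) ∧ ∀ t : Finset V, G.IsClique (↑t : Set V) → s ⊆ t → s = t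

/-- A dominating `i`-clique of `G`: a set of `i`-cliques such that every maximal clique of
order at least `i` contains some member of the set. -/
def IsDominatingCliqueSet {V : Type*} (G : SimpleGraph V) (i : ℕ)
    (D : Finset (Finset V)) : Prop :=
  (∀ s ∈ D, G.IsNClique i s) ∧
    ∀ t : Finset V, IsMaxCliqueOf G t → i ≤ t.card → ∃ s ∈ D, s ⊆ t

/-- `d_i(G)`: the minimum cardinality of a dominating `i`-clique of `G`. -/
noncomputable def domNum {V : Type*} (G : SimpleGraph V) (i : ℕ) : ℕ :=
  sInf {k | ∃ D : Finset (Finset V), IsDominatingCliqueSet G i D ∧ D.card = k}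

/-- `κ̃(G)`: the maximum cardinality of the intersection of a pair of distinct maximal
cliques of `G`. -/
noncomputable def kappaTilde {V : Type*} [DecidableEq V] (G : SimpleGraph V) : ℕ :=
  sSup {k | ∃ C C' : Finset V, IsMaxCliqueOf G C ∧ IsMaxCliqueOf G C' ∧ C ≠ C' ∧
    (C ∩ C').card = k}

/-- `G` restricted to the vertex set `s` is a threshold graph: it can be built from a
one-vertex graph by repeatedly adding either an isolated vertex or a vertex adjacent to
all existing vertices. -/
inductive IsThresholdOn {V : Type*} [DecidableEq V] (G : SimpleGraph V) : Finset V → Prop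
  | single (v : V) : IsThresholdOn G {v}
  | isolated (s : Finset V) (v : V) (hv : v ∉ s) (hs : IsThresholdOn G s)
      (hiso : ∀ u ∈ s, ¬ G.Adj v u) : IsThresholdOn G (insert v s)
  | dominating (s : Finset V) (v : V) (hv : v ∉ s) (hs : IsThresholdOn G s)
      (hdom : ∀ u ∈ s, G.Adj v u) : IsThresholdOn G (insert v s)

/-- `G` is a threshold graph. -/
def IsThreshold {V : Type*} [Fintype V] [DecidableEq V] (G : SimpleGraph V) : Prop :=
  IsThresholdOn G Finset.univ

/-- `|C_i(G)|`: the number of maximal cliques of `G` with exactly `i` vertices. -/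
noncomputable def maxCliqueCount {V : Type*} [Fintype V] (G : SimpleGraph V) (i : ℕ) : ℕ :=
  {s : Finset V | IsMaxCliqueOf G s ∧ s.card = i}.ncard

/-- `s` is a maximal clique of `G` among the cliques contained in `W`, i.e. a facet of the
restriction of the clique complex of `G` to `W`. -/
def IsMaxCliqueWithin {V : Type*} (G : SimpleGraph V) (W : Finset V) (s : Finset V) : Prop :=
  s ⊆ W ∧ G.IsClique (↑s : Set V) ∧
    ∀ t : Finset V, t ⊆ W → G.IsClique (↑t : Set V) → s ⊆ t → s = t

/-- The restriction of the clique complex of `G` to `W` is pure: all its facets have the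
same cardinality. -/
def PureOn {V : Type*} (G : SimpleGraph V) (W : Finset V) : Prop :=
  ∀ s t : Finset V, IsMaxCliqueWithin G W s → IsMaxCliqueWithin G W t → s.card = t.card

private lemma thresholdOn_nonempty {V : Type} [DecidableEq V] {T : SimpleGraph V}
    {s : Finset V} (h : IsThresholdOn T s) : s.Nonempty := by
  induction h with
  | single v => exact ⟨v, mem_singleton_self v⟩
  | isolated s v _ _ _ _ => exact insert_nonempty _ _
  | dominating s v _ _ _ _ => exact insert_nonempty _ _

private lemma threshold_key {V : Type} [DecidableEq V] (T : SimpleGraph V) {s : Finset V}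
    (h : IsThresholdOn T s) :
    (∀ u ∈ s, ∀ v ∈ s, u ≠ v → T.Adj u v) ∨
    ∃ v ∈ s, ∃ u ∈ s, v ≠ u ∧
      (∀ x ∈ s, T.Adj v x → ∀ y ∈ s, y ≠ x → T.Adj x y) ∧
      ¬ (∀ y ∈ s, y ≠ v → T.Adj v y) ∧ ¬ (∀ y ∈ s, y ≠ u → T.Adj u y) := by
  induction h with
  | single v =>
      left
      intro u hu w hw hne
      simp only [mem_singleton] at hu hw
      exact absurd (hu.trans hw.symm) hne
  | isolated s v hv hs hiso ih =>
      right
      obtain ⟨u, hu⟩ := thresholdOn_nonempty hs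
      refine ⟨v, mem_insert_self _ _, u, mem_insert_of_mem hu, ?_, ?_, ?_, ?_⟩
      · rintro rfl; exact hv hu
      · intro x hx hadj
        rcases mem_insert.1 hx with rfl | hx
        · exact absurd hadj (T.irrefl)
        · exact absurd hadj (hiso x hx)
      · intro h
        exact hiso u hu (h u (mem_insert_of_mem hu) (by rintro rfl; exact hv hu))
      · intro h
        exact hiso u hu (h v (mem_insert_self _ _) (by rintro rfl; exact hv hu)).symm
  | dominating s v hv hs hdom ih =>
      rcases ih with hcomp | ⟨v0, hv0, u0, hu0, hne, hN, hnv0, hnu0⟩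
      · left
        intro a ha b hb hab
        rcases mem_insert.1 ha with h1 | h1 <;> rcases mem_insert.1 hb with h2 | h2
        · exact absurd (h1.trans h2.symm) hab
        · subst h1; exact hdom b h2
        · subst h2; exact (hdom a h1).symm
        · exact hcomp a h1 b h2 hab
      · right
        refine ⟨v0, mem_insert_of_mem hv0, u0, mem_insert_of_mem hu0, hne, ?_, ?_, ?_⟩
        · intro x hx hadj y hy hyx
          rcases mem_insert.1 hx with h1 | h1 <;> rcases mem_insert.1 hy with h2 | h2
          · exact absurd (h2.trans h1.symm) hyx
          · subst h1; exact hdom y h2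
          · subst h2; exact (hdom x h1).symm
          · exact hN x h1 hadj y h2 hyx
        · intro h; exact hnv0 (fun y hy => h y (mem_insert_of_mem hy))
        · intro h; exact hnu0 (fun y hy => h y (mem_insert_of_mem hy))

/-- A non-complete threshold graph has exactly one minimum vertex-cut. -/
theorem stmt14 {V : Type} [Fintype V] [DecidableEq V] (T : SimpleGraph V)
    (hnc : T ≠ ⊤) (hth : IsThreshold T) :
    ∃! Y : Finset V, IsVertexCut T Y ∧ Y.card = vertexConnectivity T := by
  classical
  obtain h | ⟨v, -, u, -, hvu, hN, hnv, hnu⟩ := threshold_key T hth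
  · exact absurd (by
      ext a b
      simp only [SimpleGraph.top_adj]
      exact ⟨fun hab => hab.ne, fun hab => h a (mem_univ a) b (mem_univ b) hab⟩) hnc
  set D : Finset V := univ.filter (fun w => ∀ y, y ≠ w → T.Adj w y) with hD
  have hmemD : ∀ w, w ∈ D ↔ ∀ y, y ≠ w → T.Adj w y := by
    intro w; simp [hD]
  have hvD : v ∉ D := fun h => hnv (fun y _ hy => (hmemD v).1 h y hy)
  have huD : u ∉ D := fun h => hnu (fun y _ hy => (hmemD u).1 h y hy)
  have hNv : ∀ x, T.Adj v x → x ∈ D := fun x hx =>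
    (hmemD x).2 (fun y hy => hN x (mem_univ x) hx y (mem_univ y) hy)
  have hDcut : IsVertexCut T D := by
    intro hcon
    have hv' : v ∈ (↑(Dᶜ) : Set V) := by simp [hvD]
    have hu' : u ∈ (↑(Dᶜ) : Set V) := by simp [huD]
    have key : ∀ {a b : (↑(Dᶜ) : Set V)}, (T.induce (↑(Dᶜ) : Set V)).Walk a b →
        a.1 = v → b.1 = v := by
      intro a b p
      induction p with
      | nil => exact id
      | cons hadj p ih =>
          rintro rfl
          rename_i c _
          have : T.Adj _ c.1 := hadj
          have hc : c.1 ∈ D := hNv c.1 this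
          have : c.1 ∉ D := by simpa using c.2
          exact absurd hc this
    obtain ⟨p⟩ := hcon.preconnected ⟨v, hv'⟩ ⟨u, hu'⟩
    exact hvu (key p rfl).symm
  have hsub : ∀ Y : Finset V, IsVertexCut T Y → D ⊆ Y := by
    intro Y hY
    by_contra hns
    obtain ⟨w, hwD, hwY⟩ := not_subset.1 hns
    apply hY
    have hw' : w ∈ (↑(Yᶜ) : Set V) := by simp [hwY]
    rw [SimpleGraph.connected_iff]
    refine ⟨?_, ⟨⟨w, hw'⟩⟩⟩
    have hra : ∀ c : (↑(Yᶜ) : Set V), (T.induce (↑(Yᶜ) : Set V)).Reachable c ⟨w, hw'⟩ := by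
      intro c
      by_cases hc : c.1 = w
      · have : c = ⟨w, hw'⟩ := Subtype.ext hc
        rw [this]
      · exact SimpleGraph.Adj.reachable
          (show T.Adj c.1 w from ((hmemD w).1 hwD c.1 hc).symm)
    intro a b
    exact (hra a).trans (hra b).symm
  have hκ : vertexConnectivity T = D.card := by
    have hmem : D.card ∈ {k | ∃ Y : Finset V, IsVertexCut T Y ∧ Y.card = k} := ⟨D, hDcut, rfl⟩
    refine le_antisymm (Nat.sInf_le hmem) ?_
    obtain ⟨Y, hY, hYc⟩ := Nat.sInf_mem (⟨_, hmem⟩ :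
      {k | ∃ Y : Finset V, IsVertexCut T Y ∧ Y.card = k}.Nonempty)
    calc D.card ≤ Y.card := card_le_card (hsub Y hY)
      _ = _ := hYc
  refine ⟨D, ⟨hDcut, hκ.symm⟩, ?_⟩
  rintro Y ⟨hY, hYc⟩
  exact (eq_of_subset_of_card_le (hsub Y hY) (by rw [hYc, hκ])).symm
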